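/- Let G be a simple directed graph. If there exist k1 pairwise disjoint pseudotree subgraphs of G covering E(G), with k1 < |V(G) \ S_in(G)|, then for every integer k2 with k1 < k2 <= |V(G) \ S_in(G)| there also exist k2 pairwise disjoint pseudotree subgraphs of G covering E(G). -/

import Mathlib

/-- A finite simple directed graph: a finite vertex set, a finite set of directed
edges (ordered pairs) between vertices, with no self-loops. Since `edges` is a
`Finset`, there are no repeated edges. -/
structure FinDigraph (V : Type*) [DecidableEq V] where
  verts : Finset V
  edges : Finset (V × V)
  mem_fst : ∀ e ∈ edges, e.1 ∈ verts
  mem_snd : ∀ e ∈ edges, e.2 ∈ verts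
  no_loops : ∀ e ∈ edges, e.1 ≠ e.2

namespace FinDigraph

variable {V : Type*} [DecidableEq V]

/-- Adjacency in the underlying undirected graph. -/
def Adj (G : FinDigraph V) (a b : V) : Prop := (a, b) ∈ G.edges ∨ (b, a) ∈ G.edges

/-- `G` is connected if its underlying undirected graph is connected. -/
def Connected (G : FinDigraph V) : Prop :=
  G.verts.Nonempty ∧ ∀ u ∈ G.verts, ∀ v ∈ G.verts, Relation.ReflTransGen G.Adj u v

/-- The set of in-neighbors of `j`. -/
def inNbrs (G : FinDigraph V) (j : V) : Finset V := G.verts.filter fun i => (i, j) ∈ G.edges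

/-- The set of out-neighbors of `j`. -/
def outNbrs (G : FinDigraph V) (j : V) : Finset V := G.verts.filter fun i => (j, i) ∈ G.edges

/-- The sinks of `G`: vertices without out-neighbors. -/
def sinks (G : FinDigraph V) : Finset V := G.verts.filter fun j => G.outNbrs j = ∅

/-- The sources of `G`: vertices without in-neighbors. -/
def sources (G : FinDigraph V) : Finset V := G.verts.filter fun j => G.inNbrs j = ∅

def IsSubgraph (H G : FinDigraph V) : Prop := H.verts ⊆ G.verts ∧ H.edges ⊆ G.edges

/-- A (directed) pseudotree: a connected simple directed graph with at least two
vertices in which every vertex has at most one in-neighbor. -/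
def IsPseudotree (T : FinDigraph V) : Prop :=
  T.Connected ∧ 2 ≤ T.verts.card ∧ ∀ j ∈ T.verts, (T.inNbrs j).card ≤ 1

/-- An anti-pseudotree: a connected simple directed graph with at least two
vertices in which every vertex has at most one out-neighbor. -/
def IsAntiPseudotree (T : FinDigraph V) : Prop :=
  T.Connected ∧ 2 ≤ T.verts.card ∧ ∀ j ∈ T.verts, (T.outNbrs j).card ≤ 1

/-- `l` is the list of vertices visited by a directed path from `u` to `v`:
consecutive vertices are joined by directed edges, and no vertex repeats. -/
def IsPath (G : FinDigraph V) (u v : V) (l : List V) : Prop :=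
  l ≠ [] ∧ l.Chain' (fun a b => (a, b) ∈ G.edges) ∧ l.Nodup ∧
    l.head? = some u ∧ l.getLast? = some v

/-- `r` is a root of `T` if there is exactly one directed path from `r`
to every other vertex of `T`. -/
def IsRoot (T : FinDigraph V) (r : V) : Prop :=
  r ∈ T.verts ∧ ∀ v ∈ T.verts, v ≠ r → ∃! l : List V, T.IsPath r v l

/-- `Υ(T)`: the set of roots of `T`. -/
def roots (T : FinDigraph V) : Set V := {r | T.IsRoot r}

/-- A leaf: a vertex of `T` without out-neighbors in `T`. -/
def IsLeaf (T : FinDigraph V) (v : V) : Prop := v ∈ T.verts ∧ T.outNbrs v = ∅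

/-- The edges of `E` outgoing from `j`. -/
def outEdges (E : Finset (V × V)) (j : V) : Finset (V × V) := E.filter fun e => e.1 = j

/-- The edges of `E` incoming to (ending at) `j`. -/
def inEdges (E : Finset (V × V)) (j : V) : Finset (V × V) := E.filter fun e => e.2 = j

/-- Two pseudotrees are disjoint if (1) they share no edges and (2) for every
vertex of their union, all outgoing edges (within the union of the edge sets)
belong to one and the same pseudotree. -/
def DisjointPTrees (T1 T2 : FinDigraph V) : Prop :=
  T1.edges ∩ T2.edges = ∅ ∧
  ∀ j ∈ T1.verts ∪ T2.verts,
    outEdges (T1.edges ∪ T2.edges) j ⊆ T1.edges ∨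
    outEdges (T1.edges ∪ T2.edges) j ⊆ T2.edges

/-- Two anti-pseudotrees are disjoint if they share no edges and, for every
vertex of their union, all incoming edges of that vertex are in a single one
of the two anti-pseudotrees. -/
def DisjointAntiPTrees (T1 T2 : FinDigraph V) : Prop :=
  T1.edges ∩ T2.edges = ∅ ∧
  ∀ j ∈ T1.verts ∪ T2.verts,
    inEdges (T1.edges ∪ T2.edges) j ⊆ T1.edges ∨
    inEdges (T1.edges ∪ T2.edges) j ⊆ T2.edges

/-- The union of two digraphs. -/
def union (T1 T2 : FinDigraph V) : FinDigraph V where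
  verts := T1.verts ∪ T2.verts
  edges := T1.edges ∪ T2.edges
  mem_fst := fun e he => by
    rcases Finset.mem_union.mp he with h | h
    · exact Finset.mem_union_left _ (T1.mem_fst e h)
    · exact Finset.mem_union_right _ (T2.mem_fst e h)
  mem_snd := fun e he => by
    rcases Finset.mem_union.mp he with h | h
    · exact Finset.mem_union_left _ (T1.mem_snd e h)
    · exact Finset.mem_union_right _ (T2.mem_snd e h)
  no_loops := fun e he => by
    rcases Finset.mem_union.mp he with h | h
    · exact T1.no_loops e h
    · exact T2.no_loops e h

/-- `T1` is mergeable to `T2`: they are disjoint pseudotrees sharing a vertex,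
their union graph is a pseudotree, and there is a directed path (in the union)
from every root of `T2` to every vertex of `T1`. -/
def Mergeable (T1 T2 : FinDigraph V) : Prop :=
  DisjointPTrees T1 T2 ∧ (T1.verts ∩ T2.verts).Nonempty ∧
  IsPseudotree (union T1 T2) ∧
  ∀ r ∈ roots T2, ∀ v ∈ T1.verts, ∃ l : List V, (union T1 T2).IsPath r v l

/-- The minimal star pseudotree rooted at `j`: vertex `j` together with all its
out-neighbors in `G`, and all the edges of `G` outgoing from `j`. -/
def star (G : FinDigraph V) (j : V) : FinDigraph V where
  verts := insert j (G.outNbrs j)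
  edges := G.edges.filter fun e => e.1 = j
  mem_fst := fun e he => by
    have h := Finset.mem_filter.mp he
    simp [h.2]
  mem_snd := fun e he => by
    have h := Finset.mem_filter.mp he
    have h2 : e.2 ∈ G.outNbrs j := by
      refine Finset.mem_filter.mpr ⟨G.mem_snd e h.1, ?_⟩
      have he' : e = (j, e.2) := by
        obtain ⟨a, b⟩ := e
        simp only at h ⊢
        rw [h.2]
      rw [← he']
      exact h.1
    exact Finset.mem_insert_of_mem h2
  no_loops := fun e he => G.no_loops e (Finset.mem_filter.mp he).1

/-- The minimal anti-star rooted at `j`: vertex `j` together with all its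
in-neighbors in `G`, and all the edges of `G` incoming to `j`. -/
def antiStar (G : FinDigraph V) (j : V) : FinDigraph V where
  verts := insert j (G.inNbrs j)
  edges := G.edges.filter fun e => e.2 = j
  mem_fst := fun e he => by
    have h := Finset.mem_filter.mp he
    have h2 : e.1 ∈ G.inNbrs j := by
      refine Finset.mem_filter.mpr ⟨G.mem_fst e h.1, ?_⟩
      have he' : e = (e.1, j) := by
        obtain ⟨a, b⟩ := e
        simp only at h ⊢
        rw [h.2]
      rw [← he']
      exact h.1
    exact Finset.mem_insert_of_mem h2
  mem_snd := fun e he => by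
    have h := Finset.mem_filter.mp he
    simp [h.2]
  no_loops := fun e he => G.no_loops e (Finset.mem_filter.mp he).1

end FinDigraph

/-- The three-element set `𝕄 = {1, 0, ∅}`. -/
inductive MSym : Type
  | one
  | zero
  | emp
deriving DecidableEq

/-- The commutative operator `⊙` on `𝕄`:
`1⊙1 = 1`, `1⊙0 = 0`, `1⊙∅ = 1`, `0⊙0 = 0`, `∅⊙0 = 0`, `∅⊙∅ = ∅`. -/
def modot : MSym → MSym → MSym
  | .zero, _ => .zero
  | _, .zero => .zero
  | .one, _ => .one
  | _, .one => .one
  | .emp, .emp => .emp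

open Classical in
/-- The characteristic matrix of a (disjoint pseudotree) covering `T`:
entry `(i,j)` is `1` if `T i` is mergeable to `T j`, `∅` if they share no
vertices, and `0` otherwise. -/
noncomputable def charMat {V : Type*} [DecidableEq V] {ι : Type*} (T : ι → FinDigraph V) :
    ι → ι → MSym := fun i j =>
  if FinDigraph.Mergeable (T i) (T j) then .one
  else if (T i).verts ∩ (T j).verts = ∅ then .emp
  else .zero

/-- The reduction `F(M, i, j)`: replace row `j` by (row `i`) ⊙ (row `j`),
replace column `j` by (column `i`) ⊙ (column `j`), then delete row and
column `i`. -/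
def reduceF {n : ℕ} (M : Fin n → Fin n → MSym) (i j : Fin n) :
    {k : Fin n // k ≠ i} → {k : Fin n // k ≠ i} → MSym := fun a b =>
  let M1 : Fin n → Fin n → MSym := fun p q => if p = j then modot (M i q) (M j q) else M p q
  let M2 : Fin n → Fin n → MSym := fun p q => if q = j then modot (M1 p i) (M1 p j) else M1 p q
  M2 a.val b.val

section Aux

namespace FinDigraph

variable {V : Type*} [DecidableEq V]

lemma adj_symm' (G : FinDigraph V) {a b : V} (h : G.Adj a b) : G.Adj b a := Or.symm h

lemma rtg_adj_symm (G : FinDigraph V) {a b : V} (h : Relation.ReflTransGen G.Adj a b) :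
    Relation.ReflTransGen G.Adj b a :=
  (@Relation.ReflTransGen.symmetric _ _ ⟨fun _ _ h => Or.symm h⟩).symm _ _ h

lemma disjointPTrees_symm {T1 T2 : FinDigraph V} (h : DisjointPTrees T1 T2) :
    DisjointPTrees T2 T1 := by
  obtain ⟨h1, h2⟩ := h
  constructor
  · rw [Finset.inter_comm]; exact h1
  · intro j hj
    rw [Finset.union_comm] at hj ⊢
    exact (h2 j hj).symm

/-- If `A` is a "piece" of `C` (edges and verts contained in `C`), and `C` is disjoint
from `B`, then `A` is disjoint from `B`. -/
lemma disjointPTrees_of_subset {A B C : FinDigraph V}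
    (hAe : A.edges ⊆ C.edges) (hAv : A.verts ⊆ C.verts)
    (h : DisjointPTrees C B) : DisjointPTrees A B := by
  obtain ⟨h1, h2⟩ := h
  have hCB : ∀ e, e ∈ C.edges → e ∈ B.edges → False := by
    intro e he he'
    have : e ∈ C.edges ∩ B.edges := Finset.mem_inter.mpr ⟨he, he'⟩
    rw [h1] at this; exact absurd this (Finset.notMem_empty e)
  constructor
  · ext e
    simp only [Finset.mem_inter, Finset.notMem_empty, iff_false, not_and]
    intro he he'
    exact hCB e (hAe he) he'
  · intro j hj
    have hj' : j ∈ C.verts ∪ B.verts := by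
      rcases Finset.mem_union.mp hj with h | h
      · exact Finset.mem_union_left _ (hAv h)
      · exact Finset.mem_union_right _ h
    rcases h2 j hj' with hC | hB
    · left
      intro e he
      have ⟨heu, hej⟩ := Finset.mem_filter.mp he
      rcases Finset.mem_union.mp heu with h | h
      · exact h
      · exact absurd (hCB e (hC (Finset.mem_filter.mpr ⟨Finset.mem_union_right _ h, hej⟩)) h)
          (fun f => f)
    · right
      intro e he
      have ⟨heu, hej⟩ := Finset.mem_filter.mp he
      rcases Finset.mem_union.mp heu with h | h
      · exact hB (Finset.mem_filter.mpr ⟨Finset.mem_union_left _ (hAe h), hej⟩)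
      · exact h

lemma star_isPseudotree (T : FinDigraph V) {v c : V} (hvc : (v, c) ∈ T.edges) :
    (T.star v).IsPseudotree := by
  have hcv : c ∈ T.outNbrs v :=
    Finset.mem_filter.mpr ⟨T.mem_snd _ hvc, hvc⟩
  have hcne : c ≠ v := (T.no_loops _ hvc).symm
  have hvmem : v ∈ (T.star v).verts := Finset.mem_insert_self _ _
  have hstep : ∀ a ∈ (T.star v).verts, Relation.ReflTransGen (T.star v).Adj v a := by
    intro a ha
    rcases Finset.mem_insert.mp ha with rfl | ha
    · exact Relation.ReflTransGen.refl
    · refine Relation.ReflTransGen.single (Or.inl ?_)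
      exact Finset.mem_filter.mpr ⟨(Finset.mem_filter.mp ha).2, rfl⟩
  refine ⟨⟨⟨v, hvmem⟩, ?_⟩, ?_, ?_⟩
  · intro a ha b hb
    exact Relation.ReflTransGen.trans ((T.star v).rtg_adj_symm (hstep a ha)) (hstep b hb)
  · refine Finset.one_lt_card.mpr ⟨v, hvmem, c, Finset.mem_insert_of_mem hcv, (Ne.symm hcne)⟩
  · intro j hj
    have : (T.star v).inNbrs j ⊆ {v} := by
      intro i hi
      have ⟨_, hij⟩ := Finset.mem_filter.mp hi
      have := (Finset.mem_filter.mp hij).2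
      simp only [Finset.mem_singleton]
      exact this
    calc ((T.star v).inNbrs j).card ≤ ({v} : Finset V).card := Finset.card_le_card this
      _ = 1 := Finset.card_singleton v

/-- Existence of a "good" splitting vertex. -/
lemma exists_good (T : FinDigraph V) (hdeg : ∀ j ∈ T.verts, (T.inNbrs j).card ≤ 1)
    (hW : (T.edges.image Prod.fst).Nonempty) :
    ∃ v ∈ T.edges.image Prod.fst, ∀ c, (v, c) ∈ T.edges → (∃ d, (c, d) ∈ T.edges) →
      Relation.ReflTransGen (fun a b => (a, b) ∈ T.edges ∧ a ≠ v) c v := by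
  classical
  set E := T.edges with hE
  set W := T.edges.image Prod.fst with hWdef
  have memW : ∀ {u : V}, u ∈ W ↔ ∃ d, (u, d) ∈ E := by
    intro u
    constructor
    · intro hu
      obtain ⟨e, he, hu⟩ := Finset.mem_image.mp hu
      refine ⟨e.2, ?_⟩
      have : e = (u, e.2) := by rw [← hu]
      rwa [← this]
    · rintro ⟨d, hd⟩
      exact Finset.mem_image.mpr ⟨(u, d), hd, rfl⟩
  by_cases hall : ∃ v ∈ W, ∀ c, (v, c) ∈ E → ∀ d, (c, d) ∉ E
  · obtain ⟨v, hv, hvp⟩ := hall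
    exact ⟨v, hv, fun c hc hcd => absurd hcd.choose_spec (hvp c hc hcd.choose)⟩
  · push_neg at hall
    obtain ⟨v, hv⟩ := hW
    refine ⟨v, hv, ?_⟩
    intro c hc hcd
    -- the successor function
    have hsucc : ∀ u ∈ W, ∃ c', (u, c') ∈ E ∧ c' ∈ W := by
      intro u hu
      obtain ⟨c', hc', d, hd⟩ := hall u hu
      exact ⟨c', hc', memW.mpr ⟨d, hd⟩⟩
    set f : V → V := fun u =>
      if h : ∃ c', (u, c') ∈ E ∧ c' ∈ W then h.choose else u with hf
    have hfprop : ∀ u ∈ W, (u, f u) ∈ E ∧ f u ∈ W := by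
      intro u hu
      have h : ∃ c', (u, c') ∈ E ∧ c' ∈ W := hsucc u hu
      simp only [hf, dif_pos h]
      exact h.choose_spec
    set g : ℕ → V := fun n => f^[n] c with hg
    have hcW : c ∈ W := memW.mpr hcd
    have hgW : ∀ n, g n ∈ W := by
      intro n
      induction n with
      | zero => exact hcW
      | succ n ih =>
        have : g (n + 1) = f (g n) := Function.iterate_succ_apply' f n c
        rw [this]
        exact (hfprop _ ih).2
    have hgE : ∀ n, (g n, g (n + 1)) ∈ E := by
      intro n
      have : g (n + 1) = f (g n) := Function.iterate_succ_apply' f n c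
      rw [this]
      exact (hfprop _ (hgW n)).1
    -- pigeonhole
    have hrep : ∃ n, 0 < n ∧ ∃ m, m < n ∧ g m = g n := by
      obtain ⟨a, _, b, _, hab, heq⟩ :=
        Finset.exists_ne_map_eq_of_card_lt_of_maps_to
          (s := Finset.range (W.card + 1)) (t := W)
          (by rw [Finset.card_range]; omega) (fun n _ => hgW n)
      rcases lt_or_gt_of_ne hab with h | h
      · exact ⟨b, by omega, a, h, heq⟩
      · exact ⟨a, by omega, b, h, heq.symm⟩
    set j := Nat.find hrep with hj
    obtain ⟨hjpos, i, hij, hgij⟩ := Nat.find_spec hrep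
    have hdist : ∀ a b, a < b → b < j → g a ≠ g b := by
      intro a b hab hbj hgab
      exact Nat.find_min hrep hbj ⟨by omega, a, hab, hgab⟩
    have hi0 : i = 0 := by
      by_contra hi
      have h1 : (g (i - 1), g i) ∈ E := by
        have := hgE (i - 1)
        rwa [show i - 1 + 1 = i by omega] at this
      have h2 : (g (j - 1), g i) ∈ E := by
        have := hgE (j - 1)
        rw [show j - 1 + 1 = j by omega] at this
        rwa [← hgij] at this
      have hmem : g (i - 1) ∈ T.inNbrs (g i) :=
        Finset.mem_filter.mpr ⟨T.mem_fst _ h1, h1⟩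
      have hmem2 : g (j - 1) ∈ T.inNbrs (g i) :=
        Finset.mem_filter.mpr ⟨T.mem_fst _ h2, h2⟩
      have := Finset.card_le_one.mp (hdeg (g i) (T.mem_snd _ h1)) _ hmem _ hmem2
      exact hdist (i - 1) (j - 1) (by omega) (by omega) this
    subst hi0
    -- g j = c and v = g (j-1)
    have hgj : g j = c := hgij.symm
    have hvj : v = g (j - 1) := by
      have h2 : (g (j - 1), c) ∈ E := by
        have := hgE (j - 1)
        rw [show j - 1 + 1 = j by omega] at this
        rwa [hgj] at this
      have hmem : v ∈ T.inNbrs c := Finset.mem_filter.mpr ⟨T.mem_fst (v, c) hc, hc⟩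
      have hmem2 : g (j - 1) ∈ T.inNbrs c := Finset.mem_filter.mpr ⟨T.mem_fst _ h2, h2⟩
      exact Finset.card_le_one.mp (hdeg c (T.mem_snd (v, c) hc)) _ hmem _ hmem2
    have hpath : ∀ t, t ≤ j - 1 →
        Relation.ReflTransGen (fun a b => (a, b) ∈ E ∧ a ≠ v) c (g t) := by
      intro t ht
      induction t with
      | zero => exact Relation.ReflTransGen.refl
      | succ t ih =>
        refine Relation.ReflTransGen.tail (ih (by omega)) ⟨hgE t, ?_⟩
        rw [hvj]
        exact hdist t (j - 1) (by omega) (by omega)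
    have := hpath (j - 1) le_rfl
    rwa [← hvj] at this

/-- The splitting lemma: a pseudotree with at least two distinct edge-tails can be
split into two disjoint pseudotrees partitioning its edges. -/
lemma split (T : FinDigraph V) (hT : T.IsPseudotree)
    (h2 : 2 ≤ (T.edges.image Prod.fst).card) :
    ∃ T1 T2 : FinDigraph V, T1.IsPseudotree ∧ T2.IsPseudotree ∧
      T1.verts ⊆ T.verts ∧ T2.verts ⊆ T.verts ∧
      T1.edges ∪ T2.edges = T.edges ∧ DisjointPTrees T1 T2 := by
  classical
  obtain ⟨hconn, hcard, hdeg⟩ := hT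
  obtain ⟨v, hvW, hvgood⟩ := T.exists_good hdeg (Finset.card_pos.mp (by omega))
  have hvE : ∃ x, (v, x) ∈ T.edges := by
    obtain ⟨e, he, h1⟩ := Finset.mem_image.mp hvW
    refine ⟨e.2, ?_⟩
    have : e = (v, e.2) := by rw [← h1]
    rwa [← this]
  obtain ⟨x0, hx0⟩ := hvE
  -- T1 is the star at v
  set T1 := T.star v with hT1
  have hT1e : T1.edges = T.edges.filter fun e => e.1 = v := rfl
  have hT1sub : T1.edges ⊆ T.edges := Finset.filter_subset _ _
  have hT1v : T1.verts ⊆ T.verts := by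
    intro a ha
    rcases Finset.mem_insert.mp ha with rfl | ha
    · exact T.mem_fst _ hx0
    · exact (Finset.mem_filter.mp ha).1
  -- T2 is the rest
  set E2 := T.edges.filter (fun e => e.1 ≠ v) with hE2
  have hE2sub : E2 ⊆ T.edges := Finset.filter_subset _ _
  set V2 := E2.image Prod.fst ∪ E2.image Prod.snd with hV2
  set T2 : FinDigraph V := ⟨V2, E2, fun e he => Finset.mem_union_left _
      (Finset.mem_image.mpr ⟨e, he, rfl⟩),
    fun e he => Finset.mem_union_right _ (Finset.mem_image.mpr ⟨e, he, rfl⟩),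
    fun e he => T.no_loops e (hE2sub he)⟩ with hT2
  have hT2e : T2.edges = E2 := rfl
  have hV2sub : T2.verts ⊆ T.verts := by
    intro a ha
    rcases Finset.mem_union.mp ha with h | h
    · obtain ⟨e, he, h1⟩ := Finset.mem_image.mp h
      exact h1 ▸ T.mem_fst e (hE2sub he)
    · obtain ⟨e, he, h1⟩ := Finset.mem_image.mp h
      exact h1 ▸ T.mem_snd e (hE2sub he)
  -- another tail u ≠ v exists
  obtain ⟨u, huW, huv⟩ := Finset.exists_mem_ne (s := T.edges.image Prod.fst) (by omega) v
  have huE : ∃ x, (u, x) ∈ E2 := by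
    obtain ⟨e, he, h1⟩ := Finset.mem_image.mp huW
    refine ⟨e.2, ?_⟩
    have he' : e = (u, e.2) := by rw [← h1]
    rw [← he']
    exact Finset.mem_filter.mpr ⟨he, by rw [h1]; exact huv⟩
  obtain ⟨x1, hx1⟩ := huE
  have huV2 : u ∈ T2.verts := Finset.mem_union_left _ (Finset.mem_image.mpr ⟨_, hx1, rfl⟩)
  have hx1V2 : x1 ∈ T2.verts := Finset.mem_union_right _ (Finset.mem_image.mpr ⟨_, hx1, rfl⟩)
  -- membership in verts2 at the head of a removed edge means an out-edge exists
  have hW2 : ∀ w, (v, w) ∈ T.edges → w ∈ T2.verts → ∃ d, (w, d) ∈ T.edges := by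
    intro w hvw hw
    rcases Finset.mem_union.mp hw with h | h
    · obtain ⟨e, he, h1⟩ := Finset.mem_image.mp h
      refine ⟨e.2, ?_⟩
      have he' : e = (w, e.2) := by rw [← h1]
      rw [← he']
      exact hE2sub he
    · obtain ⟨e, he, h1⟩ := Finset.mem_image.mp h
      exfalso
      have heE : e ∈ T.edges := hE2sub he
      have h2 : (e.1, w) ∈ T.edges := by
        have he' : e = (e.1, w) := by rw [← h1]
        rwa [← he']
      have hm1 : v ∈ T.inNbrs w := Finset.mem_filter.mpr ⟨T.mem_fst _ hvw, hvw⟩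
      have hm2 : e.1 ∈ T.inNbrs w := Finset.mem_filter.mpr ⟨T.mem_fst (e.1, w) h2, h2⟩
      have := Finset.card_le_one.mp (hdeg w (T.mem_snd _ hvw)) _ hm2 _ hm1
      exact (Finset.mem_filter.mp he).2 this
  -- the key connectivity claim
  have claimC : ∀ w, Relation.ReflTransGen T.Adj v w → w ∈ T2.verts →
      Relation.ReflTransGen T2.Adj v w := by
    intro w hw
    induction hw with
    | refl => intro _; exact Relation.ReflTransGen.refl
    | @tail y w hvy hyw ih =>
      intro hwV
      rcases hyw with hyw | hwy
      · by_cases hy : y = v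
        · rw [hy] at hyw
          obtain ⟨d, hd⟩ := hW2 w hyw hwV
          have hret := hvgood w hyw ⟨d, hd⟩
          have : Relation.ReflTransGen T2.Adj w v := by
            refine Relation.ReflTransGen.mono ?_ _ _ hret
            rintro a b ⟨hab, hav⟩
            exact Or.inl (Finset.mem_filter.mpr ⟨hab, hav⟩)
          exact T2.rtg_adj_symm this
        · have hyw2 : (y, w) ∈ E2 := Finset.mem_filter.mpr ⟨hyw, hy⟩
          have hyV : y ∈ T2.verts := Finset.mem_union_left _ (Finset.mem_image.mpr ⟨_, hyw2, rfl⟩)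
          exact Relation.ReflTransGen.tail (ih hyV) (Or.inl hyw2)
      · by_cases hwv : w = v
        · subst hwv; exact Relation.ReflTransGen.refl
        · have hwy2 : (w, y) ∈ E2 := Finset.mem_filter.mpr ⟨hwy, hwv⟩
          have hyV : y ∈ T2.verts := Finset.mem_union_right _ (Finset.mem_image.mpr ⟨_, hwy2, rfl⟩)
          exact Relation.ReflTransGen.tail (ih hyV) (Or.inr hwy2)
  have hvT : v ∈ T.verts := T.mem_fst _ hx0
  have hT2conn : T2.Connected := by
    refine ⟨⟨u, huV2⟩, ?_⟩
    intro a ha b hb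
    have pa := claimC a (hconn.2 v hvT a (hV2sub ha)) ha
    have pb := claimC b (hconn.2 v hvT b (hV2sub hb)) hb
    exact Relation.ReflTransGen.trans (T2.rtg_adj_symm pa) pb
  have hT2pt : T2.IsPseudotree := by
    refine ⟨hT2conn, ?_, ?_⟩
    · exact Finset.one_lt_card.mpr ⟨u, huV2, x1, hx1V2, T.no_loops _ (hE2sub hx1)⟩
    · intro j hj
      have hsub : T2.inNbrs j ⊆ T.inNbrs j := by
        intro i hi
        have ⟨hiv, hij⟩ := Finset.mem_filter.mp hi
        exact Finset.mem_filter.mpr ⟨hV2sub hiv, hE2sub hij⟩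
      exact le_trans (Finset.card_le_card hsub) (hdeg j (hV2sub hj))
  refine ⟨T1, T2, T.star_isPseudotree hx0, hT2pt, hT1v, hV2sub, ?_, ?_, ?_⟩
  · ext e
    simp only [Finset.mem_union, hT1e, hT2e, hE2, Finset.mem_filter]
    constructor
    · rintro (⟨h, _⟩ | ⟨h, _⟩) <;> exact h
    · intro h
      by_cases he : e.1 = v
      · exact Or.inl ⟨h, he⟩
      · exact Or.inr ⟨h, he⟩
  · ext e
    simp only [Finset.mem_inter, Finset.notMem_empty, iff_false]
    rintro ⟨h1, h2⟩
    rw [hT1e] at h1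
    rw [hT2e, hE2] at h2
    exact (Finset.mem_filter.mp h2).2 (Finset.mem_filter.mp h1).2
  · intro j _
    by_cases hj : j = v
    · left
      intro e he
      have ⟨heu, hej⟩ := Finset.mem_filter.mp he
      have heE : e ∈ T.edges := by
        rcases Finset.mem_union.mp heu with h | h
        · exact hT1sub h
        · exact hE2sub h
      exact Finset.mem_filter.mpr ⟨heE, by rw [hej, hj]⟩
    · right
      intro e he
      have ⟨heu, hej⟩ := Finset.mem_filter.mp he
      have heE : e ∈ T.edges := by
        rcases Finset.mem_union.mp heu with h | h
        · exact hT1sub h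
        · exact hE2sub h
      exact Finset.mem_filter.mpr ⟨heE, by rw [hej]; exact hj⟩

/-- One refinement step: a covering by `k` disjoint pseudotrees with
`k < |V \ S|` can be refined to a covering by `k + 1` disjoint pseudotrees. -/
lemma step_lemma (G : FinDigraph V) (k : ℕ) (T : Fin k → FinDigraph V)
    (hpt : ∀ i, (T i).IsPseudotree) (hsub : ∀ i, (T i).IsSubgraph G)
    (hdis : ∀ i j, i ≠ j → DisjointPTrees (T i) (T j))
    (hcov : ∀ e ∈ G.edges, ∃ i, e ∈ (T i).edges)
    (hk : k < (G.verts \ G.sinks).card) :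
    ∃ T' : Fin (k + 1) → FinDigraph V,
      (∀ i, (T' i).IsPseudotree) ∧ (∀ i, (T' i).IsSubgraph G) ∧
      (∀ i j, i ≠ j → DisjointPTrees (T' i) (T' j)) ∧
      (∀ e ∈ G.edges, ∃ i, e ∈ (T' i).edges) := by
  classical
  -- some tree has at least two distinct edge-tails
  have hbig : ∃ i0, 2 ≤ ((T i0).edges.image Prod.fst).card := by
    by_contra hno
    push_neg at hno
    have hsubset : G.verts \ G.sinks ⊆
        Finset.univ.biUnion (fun i => (T i).edges.image Prod.fst) := by
      intro j hj
      have ⟨hjv, hjs⟩ := Finset.mem_sdiff.mp hj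
      have : G.outNbrs j ≠ ∅ := by
        intro h
        exact hjs (Finset.mem_filter.mpr ⟨hjv, h⟩)
      obtain ⟨x, hx⟩ := Finset.nonempty_iff_ne_empty.mpr this
      have hjx : (j, x) ∈ G.edges := (Finset.mem_filter.mp hx).2
      obtain ⟨i, hi⟩ := hcov (j, x) hjx
      exact Finset.mem_biUnion.mpr ⟨i, Finset.mem_univ i,
        Finset.mem_image.mpr ⟨(j, x), hi, rfl⟩⟩
    have h1 : (G.verts \ G.sinks).card ≤
        ∑ i : Fin k, ((T i).edges.image Prod.fst).card :=
      le_trans (Finset.card_le_card hsubset) (Finset.card_biUnion_le)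
    have h2 : ∑ i : Fin k, ((T i).edges.image Prod.fst).card ≤ ∑ _i : Fin k, 1 :=
      Finset.sum_le_sum (fun i _ => Nat.lt_succ_iff.mp (hno i))
    simp only [Finset.sum_const, Finset.card_univ, Fintype.card_fin, smul_eq_mul,
      mul_one] at h2
    omega
  obtain ⟨i0, hi0⟩ := hbig
  obtain ⟨T1, T2, hpt1, hpt2, hv1, hv2, hun, hd12⟩ := (T i0).split (hpt i0) hi0
  have he1 : T1.edges ⊆ (T i0).edges := by
    rw [← hun]; exact Finset.subset_union_left
  have he2 : T2.edges ⊆ (T i0).edges := by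
    rw [← hun]; exact Finset.subset_union_right
  set T' : Fin (k + 1) → FinDigraph V := fun j =>
    if h : (j : ℕ) < k then (if (⟨j, h⟩ : Fin k) = i0 then T1 else T ⟨j, h⟩) else T2
    with hT'
  have hval : ∀ (j : Fin (k + 1)) (h : (j : ℕ) < k),
      T' j = if (⟨j, h⟩ : Fin k) = i0 then T1 else T ⟨j, h⟩ := by
    intro j h
    simp only [hT', dif_pos h]
  have hlastval : ∀ (j : Fin (k + 1)), ¬ ((j : ℕ) < k) → T' j = T2 := by
    intro j h
    simp only [hT', dif_neg h]
  have hcases : ∀ j : Fin (k + 1), T' j = T1 ∨ T' j = T2 ∨ ∃ i : Fin k, i ≠ i0 ∧ T' j = T i := by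
    intro j
    by_cases h : (j : ℕ) < k
    · rw [hval j h]
      by_cases h2 : (⟨j, h⟩ : Fin k) = i0
      · left; rw [if_pos h2]
      · right; right; exact ⟨⟨j, h⟩, h2, by rw [if_neg h2]⟩
    · right; left; exact hlastval j h
  refine ⟨T', ?_, ?_, ?_, ?_⟩
  · intro i
    rcases hcases i with h | h | ⟨i', _, h⟩ <;> rw [h]
    · exact hpt1
    · exact hpt2
    · exact hpt i'
  · intro i
    rcases hcases i with h | h | ⟨i', _, h⟩ <;> rw [h]
    · exact ⟨hv1.trans (hsub i0).1, he1.trans (hsub i0).2⟩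
    · exact ⟨hv2.trans (hsub i0).1, he2.trans (hsub i0).2⟩
    · exact hsub i'
  · intro a b hab
    by_cases ha : (a : ℕ) < k <;> by_cases hb : (b : ℕ) < k
    · set a' : Fin k := ⟨a, ha⟩
      set b' : Fin k := ⟨b, hb⟩
      have hab' : a' ≠ b' := by
        intro h
        have := congrArg Fin.val h
        simp only [a', b'] at this
        exact hab (Fin.ext this)
      rw [hval a ha, hval b hb]
      by_cases h1 : a' = i0 <;> by_cases h2 : b' = i0
      · exact absurd (h1.trans h2.symm) hab'
      · rw [if_pos h1, if_neg h2]
        exact disjointPTrees_of_subset he1 hv1 (hdis i0 b' (fun h => h2 h.symm))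
      · rw [if_neg h1, if_pos h2]
        exact disjointPTrees_symm
          (disjointPTrees_of_subset he1 hv1 (hdis i0 a' (fun h => h1 h.symm)))
      · rw [if_neg h1, if_neg h2]
        exact hdis a' b' hab'
    · rw [hval a ha, hlastval b hb]
      set a' : Fin k := ⟨a, ha⟩
      by_cases h1 : a' = i0
      · rw [if_pos h1]; exact hd12
      · rw [if_neg h1]
        exact disjointPTrees_symm
          (disjointPTrees_of_subset he2 hv2 (hdis i0 a' (fun h => h1 h.symm)))
    · rw [hlastval a ha, hval b hb]
      set b' : Fin k := ⟨b, hb⟩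
      by_cases h2 : b' = i0
      · rw [if_pos h2]; exact disjointPTrees_symm hd12
      · rw [if_neg h2]
        exact disjointPTrees_of_subset he2 hv2 (hdis i0 b' (fun h => h2 h.symm))
    · exfalso
      apply hab
      apply Fin.ext
      have := a.isLt
      have := b.isLt
      omega
  · intro e he
    obtain ⟨i, hi⟩ := hcov e he
    by_cases h : i = i0
    · subst h
      have : e ∈ T1.edges ∪ T2.edges := by rw [hun]; exact hi
      rcases Finset.mem_union.mp this with h | h
      · refine ⟨⟨(i : ℕ), by omega⟩, ?_⟩
        rw [hval ⟨(i : ℕ), by omega⟩ (by simp only [Fin.val_natCast]; omega)]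
        simp only [Fin.eta, if_pos rfl]
        exact h
      · refine ⟨Fin.last k, ?_⟩
        rw [hlastval (Fin.last k) (by simp [Fin.last])]
        exact h
    · refine ⟨⟨(i : ℕ), by omega⟩, ?_⟩
      rw [hval ⟨(i : ℕ), by omega⟩ (by simp only [Fin.val_natCast]; omega)]
      simp only [Fin.eta, if_neg h]
      exact hi

end FinDigraph

end Aux
/-- if `E(G)` is covered by `k1` pairwise disjoint pseudotrees with
`k1 < |V(G) \ S_in(G)|`, then for every `k2` with `k1 < k2 ≤ |V(G) \ S_in(G)|`
there is also a covering of `E(G)` by `k2` pairwise disjoint pseudotrees. -/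
theorem statement_3 {V : Type*} [DecidableEq V] (G : FinDigraph V)
    (k1 : ℕ) (T : Fin k1 → FinDigraph V)
    (hpt : ∀ i, (T i).IsPseudotree) (hsub : ∀ i, (T i).IsSubgraph G)
    (hdis : ∀ i j, i ≠ j → FinDigraph.DisjointPTrees (T i) (T j))
    (hcov : ∀ e ∈ G.edges, ∃ i, e ∈ (T i).edges)
    (hk1 : k1 < (G.verts \ G.sinks).card) :
    ∀ k2 : ℕ, k1 < k2 → k2 ≤ (G.verts \ G.sinks).card →
      ∃ T' : Fin k2 → FinDigraph V,
        (∀ i, (T' i).IsPseudotree) ∧ (∀ i, (T' i).IsSubgraph G) ∧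
        (∀ i j, i ≠ j → FinDigraph.DisjointPTrees (T' i) (T' j)) ∧
        (∀ e ∈ G.edges, ∃ i, e ∈ (T' i).edges) := by
  intro k2 hlt hle
  have key : ∀ m : ℕ, k1 ≤ m → m ≤ (G.verts \ G.sinks).card →
      ∃ T' : Fin m → FinDigraph V,
        (∀ i, (T' i).IsPseudotree) ∧ (∀ i, (T' i).IsSubgraph G) ∧
        (∀ i j, i ≠ j → FinDigraph.DisjointPTrees (T' i) (T' j)) ∧
        (∀ e ∈ G.edges, ∃ i, e ∈ (T' i).edges) := by
    intro m hm
    induction m, hm using Nat.le_induction with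
    | base => exact fun _ => ⟨T, hpt, hsub, hdis, hcov⟩
    | succ n hn ih =>
      intro hle'
      obtain ⟨S, hS1, hS2, hS3, hS4⟩ := ih (by omega)
      exact G.step_lemma n S hS1 hS2 hS3 hS4 (by omega)
  exact key k2 (by omega) hle
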